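/- arXiv:1902.01781 — 5 statements merged into one kernel-verified Lean document; each statement's English description precedes it below -/
import Mathlib

section
/- Let (v_l)_{l≥0} and (ṽ_l)_{l≥0} be sequences of real numbers, let τ ≥ 1 be an integer such that v_l = ṽ_{l−1} for all l ≥ τ, and let 0 ≤ k ≤ m be integers. Then (1/(m−k+1)) Σ_{l=k}^{m} [ v_l + Σ_{j=l+1}^{τ−1} (v_j − ṽ_{j−1}) ] = (1/(m−k+1)) Σ_{l=k}^{m} v_l + Σ_{l=k+1}^{τ−1} min(1, (l−k)/(m−k+1)) · (v_l − ṽ_{l−1}). -/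
/-- The time-averaged estimator `H_{k:m}`, defined as the average of the single-time
estimators `H_l = v_l + ∑_{j=l+1}^{τ-1}(v_j - ṽ_{j-1})` over `l ∈ {k,…,m}`, decomposes
as an ergodic-average term plus a bias-correction term. -/
theorem time_averaged_estimator_decomposition
    (v vt : ℕ → ℝ) (τ : ℕ) (hτ : 1 ≤ τ)
    (hmeet : ∀ l : ℕ, τ ≤ l → v l = vt (l - 1))
    (k m : ℕ) (hkm : k ≤ m) :
    (1 / ((m : ℝ) - k + 1)) *
        ∑ l ∈ Finset.Icc k m, (v l + ∑ j ∈ Finset.Ico (l + 1) τ, (v j - vt (j - 1)))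
      = (1 / ((m : ℝ) - k + 1)) * ∑ l ∈ Finset.Icc k m, v l
        + ∑ l ∈ Finset.Ico (k + 1) τ,
            min 1 (((l : ℝ) - k) / ((m : ℝ) - k + 1)) * (v l - vt (l - 1)) := by
  have hkR : (k : ℝ) ≤ m := Nat.cast_le.mpr hkm
  have hd : (0:ℝ) < (m : ℝ) - k + 1 := by linarith
  rw [Finset.sum_add_distrib, mul_add]
  congr 1
  have swap : ∑ l ∈ Finset.Icc k m, ∑ j ∈ Finset.Ico (l + 1) τ, (v j - vt (j - 1))
      = ∑ j ∈ Finset.Ico (k + 1) τ,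
          ((min (m + 1) j - k : ℕ) : ℝ) * (v j - vt (j - 1)) := by
    have step1 : ∀ l ∈ Finset.Icc k m,
        ∑ j ∈ Finset.Ico (l + 1) τ, (v j - vt (j - 1))
          = ∑ j ∈ Finset.Ico (k + 1) τ, if l < j then (v j - vt (j - 1)) else 0 := by
      intro l hl
      rw [← Finset.sum_filter]
      congr 1
      ext j
      simp only [Finset.mem_Ico, Finset.mem_filter, Finset.mem_Icc] at *
      omega
    rw [Finset.sum_congr rfl step1, Finset.sum_comm]
    refine Finset.sum_congr rfl fun j hj => ?_
    rw [← Finset.sum_filter, Finset.sum_const]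
    have hcard : (Finset.Icc k m).filter (fun l => l < j) = Finset.Ico k (min (m + 1) j) := by
      ext l
      simp only [Finset.mem_Ico, Finset.mem_filter, Finset.mem_Icc, lt_min_iff]
      omega
    rw [hcard, Nat.card_Ico, nsmul_eq_mul]
  rw [swap, Finset.mul_sum]
  refine Finset.sum_congr rfl fun j hj => ?_
  simp only [Finset.mem_Ico] at hj
  have hkj : k + 1 ≤ j := hj.1
  have hcast : ((min (m + 1) j - k : ℕ) : ℝ) = min ((m : ℝ) - k + 1) ((j : ℝ) - k) := by
    rw [Nat.cast_sub (by omega), Nat.cast_min]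
    push_cast
    rw [← min_sub_sub_right]
    ring_nf
  rw [hcast, ← mul_assoc]
  congr 1
  rw [one_div, inv_mul_eq_div, ← min_div_div_right hd.le, div_self hd.ne']
end

section
/- Let (Ω, F, P) be a probability space, let (V_n)_{n≥0} and (Ṽ_n)_{n≥0} be integrable real-valued random variables such that V_n and Ṽ_n have the same distribution for every n, and let τ : Ω → ℕ ∪ {∞} satisfy: almost surely V_n = Ṽ_{n−1} for all n ≥ τ. Then for all integers 0 ≤ k < t: E[V_t] = E[ V_k + Σ_{l=k+1}^{t} 1{l ≤ τ−1} (V_l − Ṽ_{l−1}) ], i.e. E[V_t] = E[ V_k + Σ_{l=k+1}^{t ∧ (τ−1)} (V_l − Ṽ_{l−1}) ]. -/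
open MeasureTheory
open scoped Classical

private lemma telescope_Icc (f : ℕ → ℝ) (k : ℕ) :
    ∀ t, k + 1 ≤ t → ∑ l ∈ Finset.Icc (k + 1) t, (f l - f (l - 1)) = f t - f k := by
  intro t ht
  induction t, ht using Nat.le_induction with
  | base => simp
  | succ t ht ih =>
    rw [Finset.sum_Icc_succ_top (by omega), ih]
    simp

/-- The telescoping-sum identity underlying unbiased estimation via coupled chains:
`E[V_t] = E[V_k + ∑_{l=k+1}^{t ∧ (τ-1)} (V_l - Ṽ_{l-1})]`. -/
theorem telescoping_coupled_identity
    {Ω : Type*} [MeasurableSpace Ω] (P : Measure Ω) [IsProbabilityMeasure P]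
    (V Vt : ℕ → Ω → ℝ) (τ : Ω → ℕ∞)
    (hVmeas : ∀ n, Measurable (V n)) (hVtmeas : ∀ n, Measurable (Vt n))
    (hτmeas : ∀ n : ℕ, MeasurableSet {ω | (n : ℕ∞) < τ ω})
    (hVint : ∀ n, Integrable (V n) P) (hVtint : ∀ n, Integrable (Vt n) P)
    (hdist : ∀ n, P.map (V n) = P.map (Vt n))
    (hmeet : ∀ᵐ ω ∂P, ∀ n : ℕ, τ ω ≤ (n : ℕ∞) → V n ω = Vt (n - 1) ω)
    (k t : ℕ) (hkt : k < t) :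
    ∫ ω, V t ω ∂P
      = ∫ ω, (V k ω + ∑ l ∈ Finset.Icc (k + 1) t,
          if (l : ℕ∞) < τ ω then V l ω - Vt (l - 1) ω else 0) ∂P := by
  -- a.e. the integrand equals the full telescoping sum
  have heq : ∀ᵐ ω ∂P,
      (V k ω + ∑ l ∈ Finset.Icc (k + 1) t,
          if (l : ℕ∞) < τ ω then V l ω - Vt (l - 1) ω else 0)
        = V k ω + ∑ l ∈ Finset.Icc (k + 1) t, (V l ω - Vt (l - 1) ω) := by
    filter_upwards [hmeet] with ω hω
    congr 1
    apply Finset.sum_congr rfl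
    intro l _
    by_cases h : (l : ℕ∞) < τ ω
    · simp [h]
    · rw [if_neg h, hω l (le_of_not_gt h)]
      ring
  rw [integral_congr_ae heq]
  have hVtint' : ∀ l ∈ Finset.Icc (k + 1) t,
      Integrable (fun ω => V l ω - Vt (l - 1) ω) P := fun l _ =>
    (hVint l).sub (hVtint (l - 1))
  rw [integral_add (hVint k) (integrable_finset_sum _ hVtint'),
    integral_finset_sum _ hVtint']
  have hInt : ∀ n, ∫ ω, Vt n ω ∂P = ∫ ω, V n ω ∂P := by
    intro n
    have h1 : ∫ x, x ∂(P.map (V n)) = ∫ ω, V n ω ∂P :=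
      integral_map (hVmeas n).aemeasurable measurable_id.aestronglyMeasurable
    have h2 : ∫ x, x ∂(P.map (Vt n)) = ∫ ω, Vt n ω ∂P :=
      integral_map (hVtmeas n).aemeasurable measurable_id.aestronglyMeasurable
    rw [← h1, ← h2, hdist n]
  have : ∀ l ∈ Finset.Icc (k + 1) t,
      ∫ ω, (V l ω - Vt (l - 1) ω) ∂P
        = (fun n => ∫ ω, V n ω ∂P) l - (fun n => ∫ ω, V n ω ∂P) (l - 1) := by
    intro l _
    rw [integral_sub (hVint l) (hVtint (l - 1)), hInt (l - 1)]
  rw [Finset.sum_congr rfl this, telescope_Icc _ k t hkt]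
  ring
end

section
/- For every probability measure g on ℝ, ∫∫ min(1, exp(z'−z)) g(dz) g(dz') ≥ 1/2. -/
open MeasureTheory

/-- For every probability measure `g` on `ℝ`,
`∫∫ min(1, exp(z'-z)) g(dz) g(dz') ≥ 1/2`. -/
theorem double_integral_min_exp_ge_half (g : Measure ℝ) [IsProbabilityMeasure g] :
    (1 : ℝ) / 2 ≤ ∫ z, ∫ z', min 1 (Real.exp (z' - z)) ∂g ∂g := by
  set F : ℝ × ℝ → ℝ := fun p => min 1 (Real.exp (p.2 - p.1)) with hF
  have hcont : Continuous F := by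
    apply Continuous.min continuous_const
    exact Real.continuous_exp.comp (continuous_snd.sub continuous_fst)
  have hint : Integrable F (g.prod g) := by
    refine Integrable.mono' (integrable_const 1) hcont.aestronglyMeasurable ?_
    filter_upwards with p
    rw [Real.norm_eq_abs, abs_of_nonneg (le_min zero_le_one (Real.exp_pos _).le)]
    exact min_le_left _ _
  have hswapint : Integrable (fun p => F p.swap) (g.prod g) := by
    refine Integrable.mono' (integrable_const 1)
      ((hcont.comp continuous_swap).aestronglyMeasurable) ?_
    filter_upwards with p
    rw [Real.norm_eq_abs, abs_of_nonneg (le_min zero_le_one (Real.exp_pos _).le)]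
    exact min_le_left _ _
  have hswap : ∫ p, F p.swap ∂(g.prod g) = ∫ p, F p ∂(g.prod g) :=
    integral_prod_swap F
  have h1 : ∫ z, ∫ z', min 1 (Real.exp (z' - z)) ∂g ∂g = ∫ p, F p ∂(g.prod g) :=
    (integral_prod F hint).symm
  have hsum : ∀ p : ℝ × ℝ, (1 : ℝ) ≤ F p + F p.swap := by
    intro p
    simp only [hF, Prod.fst_swap, Prod.snd_swap]
    rcases le_total p.1 p.2 with h | h
    · have h2 : min 1 (Real.exp (p.2 - p.1)) = 1 :=
        min_eq_left (Real.one_le_exp (by linarith))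
      have h3 : (0 : ℝ) ≤ min 1 (Real.exp (p.1 - p.2)) :=
        le_min zero_le_one (Real.exp_pos _).le
      linarith
    · have h2 : min 1 (Real.exp (p.1 - p.2)) = 1 :=
        min_eq_left (Real.one_le_exp (by linarith))
      have h3 : (0 : ℝ) ≤ min 1 (Real.exp (p.2 - p.1)) :=
        le_min zero_le_one (Real.exp_pos _).le
      linarith
  have key : (1 : ℝ) ≤ ∫ p, F p ∂(g.prod g) + ∫ p, F p.swap ∂(g.prod g) := by
    calc (1 : ℝ) = ∫ _p, (1 : ℝ) ∂(g.prod g) := by simp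
    _ ≤ ∫ p, (F p + F p.swap) ∂(g.prod g) :=
        integral_mono (integrable_const 1) (hint.add hswapint) hsum
    _ = _ := integral_add hint hswapint
  rw [h1]
  linarith [hswap ▸ key]
end

section
/- Let σ > 0, let g_σ denote the density of the Normal distribution N(−σ²/2, σ²), and let Φ denote the cumulative distribution function of the standard Normal distribution. Then for every z ∈ ℝ: ∫_ℝ min(1, exp(z'−z)) g_σ(z') dz' = 1 − Φ((z + σ²/2)/σ) + exp(−z) Φ((z − σ²/2)/σ). -/
/-! On `{z' > z}` the integrand is `1`, which contributes the upper tail of `N(-σ²/2, σ²)` at `z`.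
On `{z' ≤ z}` it is `exp (z' - z)`, and exponential tilting gives
`exp (t z') N(m, v)(dz') = exp (m t + v t² / 2) N(m + v t, v)(dz')`, where the factor is `1` for
`m = -σ²/2`, `v = σ²`, `t = 1`.
That part is therefore `exp (-z)` times the distribution function of `N(σ²/2, σ²)` at `z`. -/

open MeasureTheory ProbabilityTheory

/-- The cumulative distribution function `Φ` of the standard Normal distribution. -/
noncomputable def stdNormalCDF (x : ℝ) : ℝ :=
  ((gaussianReal 0 1) (Set.Iic x)).toReal

open Real Set

lemma integral_exp_mul_gaussianReal (m t : ℝ) (v : NNReal) :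
    ∫ x, exp (t * x) ∂gaussianReal m v = exp (m * t + v * t ^ 2 / 2) :=
  congr_fun mgf_fun_id_gaussianReal t

lemma gaussianPDFReal_mul_exp_mul (m : ℝ) (v : NNReal) (t x : ℝ) :
    gaussianPDFReal m v x * (exp (t * x) / exp (m * t + v * t ^ 2 / 2))
      = gaussianPDFReal (m + v * t) v x := by
  rcases eq_or_ne v 0 with rfl | hv
  · simp
  have hv' : (v : ℝ) ≠ 0 := NNReal.coe_ne_zero.mpr hv
  simp only [gaussianPDFReal, mul_assoc, ← exp_sub, ← exp_add]
  congr 2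
  field_simp
  ring

lemma gaussianReal_tilted_mul (m t : ℝ) (v : NNReal) :
    (gaussianReal m v).tilted (t * ·) = gaussianReal (m + v * t) v := by
  rcases eq_or_ne v 0 with rfl | hv
  · simp [gaussianReal_zero_var, Measure.tilted, dirac_withDensity]
  rw [Measure.tilted, integral_exp_mul_gaussianReal, gaussianReal_of_var_ne_zero _ hv, gaussianReal_of_var_ne_zero _ hv,
    ← withDensity_mul _ (measurable_gaussianPDF m v) (by fun_prop)]
  congr with x
  simp only [Pi.mul_apply, gaussianPDF, ← ENNReal.ofReal_mul (gaussianPDFReal_nonneg m v x),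
    gaussianPDFReal_mul_exp_mul]

lemma setIntegral_exp_mul_gaussianReal (m t : ℝ) (v : NNReal) (s : Set ℝ) :
    ∫ x in s, exp (t * x) ∂gaussianReal m v
      = exp (m * t + v * t ^ 2 / 2) * (gaussianReal (m + v * t) v).real s := by
  rw [← gaussianReal_tilted_mul, measureReal_def, tilted_apply_eq_ofReal_integral, integral_exp_mul_gaussianReal,
    integral_div, ENNReal.toReal_ofReal (by positivity)]
  field_simp

lemma gaussianReal_real_Iic (m : ℝ) {v : NNReal} (hv : v ≠ 0) (t : ℝ) :
    (gaussianReal m v).real (Iic t) = stdNormalCDF ((t - m) / √v) := by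
  have hσ : 0 < √(v : ℝ) := sqrt_pos.mpr (NNReal.coe_pos.mpr (pos_iff_ne_zero.mpr hv))
  have hmap : (gaussianReal 0 1).map (fun x ↦ √v * x + m) = gaussianReal m v := by
    rw [show (fun x ↦ √v * x + m) = (· + m) ∘ (√v * ·) from rfl,
      ← Measure.map_map (measurable_add_const m) (measurable_const_mul _),
      gaussianReal_map_const_mul, gaussianReal_map_add_const]
    congr 1
    · simp
    · ext; simp
  have hpre : (fun x ↦ √v * x + m) ⁻¹' Iic t = Iic ((t - m) / √v) := by
    ext x
    simp only [mem_preimage, mem_Iic, le_div_iff₀ hσ]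
    constructor <;> intro h <;> linarith
  rw [← hmap, map_measureReal_apply (by fun_prop) measurableSet_Iic, hpre, stdNormalCDF,
    measureReal_def]

lemma integral_min_one_exp_sub (μ : Measure ℝ) [IsFiniteMeasure μ] (z : ℝ) :
    ∫ x, min 1 (exp (x - z)) ∂μ = μ.real (Ioi z) + exp (-z) * ∫ x in Iic z, exp x ∂μ := by
  have hint : Integrable (fun x ↦ min 1 (exp (x - z))) μ := by
    refine Integrable.of_bound (by fun_prop) 1 (ae_of_all _ fun x ↦ ?_)
    rw [Real.norm_of_nonneg (le_min zero_le_one (exp_pos _).le)]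
    exact min_le_left _ _
  rw [← integral_add_compl measurableSet_Iic hint, compl_Iic,
    setIntegral_congr_fun measurableSet_Ioi fun x (hx : z < x) ↦
      min_eq_left (one_le_exp (sub_nonneg.mpr hx.le)),
    setIntegral_congr_fun measurableSet_Iic fun x (hx : x ≤ z) ↦
      min_eq_right (exp_le_one_iff.mpr (sub_nonpos.mpr hx)),
    setIntegral_const, smul_eq_mul, mul_one, ← integral_const_mul]
  simp only [sub_eq_add_neg, exp_add, mul_comm, add_comm]

/-- The average acceptance probability of the limiting PIMH kernel:
`∫ min(1, exp(z'-z)) g_σ(z') dz' = 1 - Φ((z+σ²/2)/σ) + exp(-z) Φ((z-σ²/2)/σ)`,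
where `g_σ` is the `N(-σ²/2, σ²)` proposal distribution. -/
theorem average_acceptance_probability (σ : ℝ) (hσ : 0 < σ) (z : ℝ) :
    ∫ z', min 1 (Real.exp (z' - z))
        ∂(gaussianReal (-σ ^ 2 / 2) ⟨σ ^ 2, sq_nonneg σ⟩)
      = 1 - stdNormalCDF ((z + σ ^ 2 / 2) / σ)
        + Real.exp (-z) * stdNormalCDF ((z - σ ^ 2 / 2) / σ) := by
  -- The literal `⟨σ ^ 2, _⟩` is typed as a subtype, not as `NNReal`, which blocks instance search.
  set v : NNReal := ⟨σ ^ 2, sq_nonneg σ⟩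
  have hvσ : (v : ℝ) = σ ^ 2 := rfl
  clear_value v
  have hv0 : v ≠ 0 := by rw [← NNReal.coe_ne_zero, hvσ]; positivity
  have hsqrt : √(v : ℝ) = σ := by rw [hvσ, sqrt_sq hσ.le]
  have htilt : ∫ x in Iic z, exp x ∂gaussianReal (-σ ^ 2 / 2) v
      = exp (-σ ^ 2 / 2 + v / 2) * (gaussianReal (-σ ^ 2 / 2 + v) v).real (Iic z) := by
    simpa using setIntegral_exp_mul_gaussianReal (-σ ^ 2 / 2) 1 v (Iic z)
  rw [integral_min_one_exp_sub, htilt, ← compl_Iic, probReal_compl_eq_one_sub measurableSet_Iic,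
    gaussianReal_real_Iic _ hv0, gaussianReal_real_Iic _ hv0, hsqrt, hvσ,
    neg_div, neg_add_cancel, exp_zero, one_mul, neg_add_eq_sub, sub_half, sub_neg_eq_add]
end

section
/- Let (p*_n)_{n≥1} be strictly positive real numbers and (u_n)_{n≥1} ⊆ [0,1]. Let (p_n)_{n≥0} and (p̃_n)_{n≥−1} be strictly positive sequences evolving by the rules: p_{n+1} = p*_{n+1} if u_{n+1} ≤ min(1, p*_{n+1}/p_n), and p_{n+1} = p_n otherwise; p̃_n = p*_{n+1} if u_{n+1} ≤ min(1, p*_{n+1}/p̃_{n−1}), and p̃_n = p̃_{n−1} otherwise. Then for every n ≥ 1: if p_n ≥ p̃_{n−1}, then p_{n+s} ≥ p̃_{n+s−1} for all s ≥ 0. -/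
open scoped Classical

/-- Monotonicity of the coupling of two Independent Metropolis–Hastings chains
sharing common proposals and common uniforms: if the first chain's likelihood value
dominates the (lagged) second chain's at time `n ≥ 1`, it does so at all later times.
Here `q n` stands for `p̃_{n-1}`. -/
theorem coupled_imh_monotone
    (pstar u p q : ℕ → ℝ)
    (hpstar : ∀ n, 0 < pstar n) (hp : ∀ n, 0 < p n) (hq : ∀ n, 0 < q n)
    (hu : ∀ n, u n ∈ Set.Icc (0 : ℝ) 1)
    (hrecp : ∀ n : ℕ,
      p (n + 1) = if u (n + 1) ≤ min 1 (pstar (n + 1) / p n) then pstar (n + 1) else p n)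
    (hrecq : ∀ n : ℕ,
      q (n + 1) = if u (n + 1) ≤ min 1 (pstar (n + 1) / q n) then pstar (n + 1) else q n)
    (n : ℕ) (hn : 1 ≤ n) (hord : q n ≤ p n) :
    ∀ s : ℕ, q (n + s) ≤ p (n + s) := by
  intro s
  induction s with
  | zero => simpa using hord
  | succ s ih =>
    set m := n + s with hm
    have key : pstar (m + 1) / p m ≤ pstar (m + 1) / q m :=
      div_le_div_of_nonneg_left (hpstar (m + 1)).le (hq m) ih
    have hP := hrecp m
    have hQ := hrecq m
    have hgoal : q (m + 1) ≤ p (m + 1) := by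
      by_cases hq1 : u (m + 1) ≤ min 1 (pstar (m + 1) / q m)
      · rw [hQ, if_pos hq1]
        by_cases hp1 : u (m + 1) ≤ min 1 (pstar (m + 1) / p m)
        · rw [hP, if_pos hp1]
        · rw [hP, if_neg hp1]
          push_neg at hp1
          have hu1 : u (m + 1) ≤ 1 := (hu (m + 1)).2
          have hlt : pstar (m + 1) / p m < 1 := by
            by_contra hge
            push_neg at hge
            rw [min_eq_left hge] at hp1
            linarith
          have := (div_lt_one (hp m)).mp hlt
          linarith
      · rw [hQ, if_neg hq1]
        have hp1 : ¬ u (m + 1) ≤ min 1 (pstar (m + 1) / p m) := by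
          intro h
          exact hq1 (h.trans (le_min (min_le_left _ _) ((min_le_right _ _).trans key)))
        rw [hP, if_neg hp1]
        exact ih
    exact hgoal
end
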